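/- arXiv:1411.3320 — 2 statements merged into one kernel-verified Lean document; each statement's English description precedes it below -/
import Mathlib

section
/- Consider a graphical multi-hypermatrix game, a player i ∈ V, and two joint mixed strategies p and q; write Δ_j(a) = p_j(a) − q_j(a). For each clique C ∈ 𝒞_i and disjoint subsets, let M'_{i,C}(p_i, u_B, q_T) = Σ_{x_C ∈ ∏_{j∈C} A_j} p_i(x_i) (∏_{k∈B} u_k(x_k)) (∏_{l∈T} q_l(x_l)) M'_{i,C}(x_C) whenever {i} ∪ B ∪ T = C. Then M_i(p) − Σ_{C∈𝒞_i} M'_{i,C}(p_i, q_{C∖{i}}) = Σ_{C∈𝒞_i} Σ over nonempty subsets B ⊆ C∖{i} of M'_{i,C}(p_i, Δ_B, q_{C∖{i}∖B}). In words: the difference between player i's expected payoff under p and the expected payoff when i plays p_i while all other players play according to q equals the sum, over cliques of i and nonempty subsets B of the other clique members, of the multilinearly expanded difference terms. -/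
/-!
Since each `p j` has total mass one, the coordinates outside a clique `C` integrate out, so
`M_i(p) = Σ_C M'_{i,C}(p_C)`. Writing `p j = Δ j + q j` for the members `j ≠ i` of `C` and
expanding the product multilinearly turns `M'_{i,C}(p_C)` into a sum over subsets
`B ⊆ C ∖ {i}`, whose term for `B = ∅` is `M'_{i,C}(p_i, q_{C∖{i}})`.
-/

open Finset

variable {V : Type*} [Fintype V] [DecidableEq V]
variable {A : V → Type*} [∀ i, Fintype (A i)] [∀ i, DecidableEq (A i)]
  [∀ i, Nonempty (A i)]

/-- `p` is a joint mixed strategy. -/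
def IsMixed {V : Type*} {A : V → Type*} [∀ i, Fintype (A i)]
    (p : ∀ i, A i → ℝ) : Prop :=
  ∀ i, (∀ a, 0 ≤ p i a) ∧ ∑ a, p i a = 1

/-- Expected value of `M` under the product of the weight functions `w i`. -/
def expPay (w : ∀ i, A i → ℝ) (M : (∀ i, A i) → ℝ) : ℝ :=
  ∑ x : ∀ i, A i, (∏ i, w i (x i)) * M x

/-- Player `i`'s global payoff in a graphical multi-hypermatrix game with
clique systems `𝒞` and local-clique payoff hypermatrices `M'`:
`M_i(x) = Σ_{C ∈ 𝒞 i} M'_{i,C}(x_C)`. -/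
def gmhgPay (𝒞 : V → Finset (Finset V))
    (M' : (i : V) → (C : Finset V) → ((j : C) → A j) → ℝ)
    (i : V) (x : ∀ j, A j) : ℝ :=
  ∑ C ∈ 𝒞 i, M' i C (fun j => x j.1)

/-- The weighted sum of a local-clique payoff hypermatrix `g` on clique `C`,
where each coordinate `j ∈ C` is summed out with weight `w j`. -/
def cliqueExp (C : Finset V) (w : ∀ j, A j → ℝ)
    (g : ((j : C) → A j) → ℝ) : ℝ :=
  ∑ z : (j : C) → A j, (∏ j : C, w j.1 (z j)) * g z

section

variable {ι : Type*} [DecidableEq ι] {α : ι → Type*}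

theorem expPay_comp_restrict [Fintype ι] [∀ j, Fintype (α j)] (C : Finset ι)
    (w : ∀ j, α j → ℝ) (hw : ∀ j ∉ C, ∑ a, w j a = 1) (g : ((j : C) → α j) → ℝ) :
    expPay w (fun x => g fun j => x j) = cliqueExp C w g := by
  set e := Equiv.piEquivPiSubtypeProd (· ∈ C) α
  have hprod : ∀ z y, ∏ j : ι, w j (e.symm (z, y) j) =
      (∏ j : C, w j (z j)) * ∏ j : {j // j ∉ C}, w j (y j) := by
    intro z y
    rw [← prod_mul_prod_compl C, prod_subtype C fun _ => Iff.rfl,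
      prod_subtype Cᶜ fun _ => mem_compl]
    congr 1 <;> exact Fintype.prod_congr _ _ fun j => by simp [e, j.2]
  have hrestrict : ∀ z y, (fun j : C => e.symm (z, y) j) = z := by
    intro z y
    funext j
    simp [e, j.2]
  have hmass : ∑ y : (∀ j : {j // j ∉ C}, α j), ∏ j : {j // j ∉ C}, w j (y j) = 1 := by
    rw [← Fintype.prod_sum]
    exact prod_eq_one fun j _ => hw j j.2
  unfold expPay cliqueExp
  rw [← e.symm.sum_comp, Fintype.sum_prod_type]
  refine Fintype.sum_congr _ _ fun z => ?_
  simp_rw [hprod, hrestrict, mul_right_comm _ _ (g z), ← mul_sum, hmass, mul_one]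

theorem expPay_gmhgPay [Fintype ι] [∀ j, Fintype (α j)] (𝒞 : ι → Finset (Finset ι))
    (M' : (i : ι) → (C : Finset ι) → ((j : C) → α j) → ℝ) (i : ι) (w : ∀ j, α j → ℝ)
    (hw : ∀ j, ∑ a, w j a = 1) :
    expPay w (gmhgPay 𝒞 M' i) = ∑ C ∈ 𝒞 i, cliqueExp C w (M' i C) := by
  simp only [expPay, gmhgPay, mul_sum]
  rw [sum_comm]
  exact sum_congr rfl fun C _ => expPay_comp_restrict C w (fun j _ => hw j) (M' i C)

theorem prod_update_add_eq_sum_powerset {R : Type*} [Fintype ι] [CommSemiring R] (i₀ : ι)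
    (c : R) (f g : ι → R) :
    ∏ j, Function.update (f + g) i₀ c j =
      ∑ t ∈ (univ.erase i₀).powerset, ∏ j, Function.update (t.piecewise f g) i₀ c j := by
  simp only [prod_update_of_mem (mem_univ i₀), sdiff_singleton_eq_erase, Pi.add_apply,
    prod_add, mul_sum]
  refine sum_congr rfl fun t ht => ?_
  rw [prod_piecewise, inter_eq_right.2 (mem_powerset.1 ht)]

/-- The paper's profile `(p_i, Δ_B, q_T)`. -/
def diffProfile (p q : ∀ j, α j → ℝ) (i : ι) (B : Finset ι) : ∀ j, α j → ℝ :=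
  Function.update (fun j => if j ∈ B then fun a => p j a - q j a else q j) i (p i)

theorem diffProfile_empty (p q : ∀ j, α j → ℝ) (i : ι) :
    diffProfile p q i ∅ = Function.update q i (p i) := by
  simp [diffProfile]

theorem prod_eq_sum_powerset_diffProfile {C : Finset ι} {i : ι} (hi : i ∈ C)
    (p q : ∀ j, α j → ℝ) (z : (j : C) → α j) :
    ∏ j : C, p j (z j) = ∑ B ∈ (C.erase i).powerset, ∏ j : C, diffProfile p q i B j (z j) := by
  have herase : C.erase i = ((univ : Finset C).erase ⟨i, hi⟩).image Subtype.val := by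
    ext j; simp
  rw [herase, powerset_image, sum_image (image_injOn_powerset_of_injOn Subtype.val_injective.injOn)]
  convert prod_update_add_eq_sum_powerset (ι := C) ⟨i, hi⟩ (p i (z ⟨i, hi⟩))
    (fun j => p j (z j) - q j (z j)) (fun j => q j (z j)) using 1
  · refine Fintype.prod_congr _ _ fun j => ?_
    rcases eq_or_ne j ⟨i, hi⟩ with rfl | hj
    · simp
    · simp [Function.update_of_ne hj]
  · refine sum_congr rfl fun t _ => Fintype.prod_congr _ _ fun ⟨j, hjC⟩ => ?_
    by_cases hj : j = i
    · subst hj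
      simp [diffProfile]
    · have hj' : (⟨j, hjC⟩ : C) ≠ ⟨i, hi⟩ := by simpa using hj
      have hmem : j ∈ t.image Subtype.val ↔ ⟨j, hjC⟩ ∈ t := by simp [hjC]
      simp only [diffProfile, Function.update_of_ne hj, Function.update_of_ne hj',
        Finset.piecewise, hmem]
      split_ifs <;> rfl

theorem cliqueExp_eq_sum_powerset_diffProfile [∀ j, Fintype (α j)] {C : Finset ι} {i : ι}
    (hi : i ∈ C) (p q : ∀ j, α j → ℝ) (g : ((j : C) → α j) → ℝ) :
    cliqueExp C p g = ∑ B ∈ (C.erase i).powerset, cliqueExp C (diffProfile p q i B) g := by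
  simp only [cliqueExp, prod_eq_sum_powerset_diffProfile hi p q, sum_mul]
  exact sum_comm

end

theorem gmhg_expected_payoff_expansion_general (𝒞 : V → Finset (Finset V))
    (M' : (i : V) → (C : Finset V) → ((j : C) → A j) → ℝ)
    (i : V) (hC : ∀ C ∈ 𝒞 i, i ∈ C)
    (p q : ∀ j, A j → ℝ) (hp : IsMixed p) :
    expPay p (gmhgPay 𝒞 M' i) -
        (∑ C ∈ 𝒞 i, cliqueExp C (Function.update q i (p i)) (M' i C)) =
      ∑ C ∈ 𝒞 i, ∑ B ∈ (C.erase i).powerset.filter (· ≠ ∅),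
        cliqueExp C
          (Function.update
            (fun j => if j ∈ B then (fun a => p j a - q j a) else q j)
            i (p i))
          (M' i C) := by
  rw [expPay_gmhgPay 𝒞 M' i p fun j => (hp j).2, ← sum_sub_distrib]
  refine sum_congr rfl fun C hiC => ?_
  rw [cliqueExp_eq_sum_powerset_diffProfile (hC C hiC) p q, filter_ne',
    ← add_sum_erase _ _ (empty_mem_powerset _), diffProfile_empty, add_sub_cancel_left]
  rfl

/-- The multilinear difference expansion of player `i`'s expected payoff in
a GMhG: `M_i(p) − Σ_{C∈𝒞_i} M'_{i,C}(p_i, q_{C∖{i}})` equals the sum over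
cliques `C ∈ 𝒞_i` and nonempty subsets `B ⊆ C∖{i}` of
`M'_{i,C}(p_i, Δ_B, q_{C∖{i}∖B})`, where `Δ_j = p_j − q_j`. -/
theorem gmhg_expected_payoff_expansion (𝒞 : V → Finset (Finset V))
    (M' : (i : V) → (C : Finset V) → ((j : C) → A j) → ℝ)
    (i : V) (hC : ∀ C ∈ 𝒞 i, i ∈ C)
    (p q : ∀ j, A j → ℝ) (hp : IsMixed p) (hq : IsMixed q) :
    expPay p (gmhgPay 𝒞 M' i) -
        (∑ C ∈ 𝒞 i, cliqueExp C (Function.update q i (p i)) (M' i C)) =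
      ∑ C ∈ 𝒞 i, ∑ B ∈ (C.erase i).powerset.filter (· ≠ ∅),
        cliqueExp C
          (Function.update
            (fun j => if j ∈ B then (fun a => p j a - q j a) else q j)
            i (p i))
          (M' i C) :=
  gmhg_expected_payoff_expansion_general 𝒞 M' i hC p q hp
end

section
/- Let A be a nonempty finite set, let p : A → ℝ satisfy p(a) ≥ 0 for all a and Σ_{a∈A} p(a) = 1, and let s be a positive integer. Then there exists q : A → ℝ with q(a) ∈ {0, 1/s, 2/s, …, 1} for all a, Σ_{a∈A} q(a) = 1, and |q(a) − p(a)| ≤ 1/s for every a ∈ A. -/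
/-! Scale `p` by `s` and round every coordinate down; the floors fall short of `s` by at most one
per coordinate, so raising the right number of them by one gives an integer vector with sum `s`
that stays within `1` of `s • p`. -/

open Finset

theorem exists_le_le_add_one_sum_eq {ι : Type*} [Fintype ι] (f : ι → ℕ) {n : ℕ}
    (h_le : ∑ i, f i ≤ n) (h_ge : n ≤ ∑ i, f i + Fintype.card ι) :
    ∃ g : ι → ℕ, (∀ i, f i ≤ g i ∧ g i ≤ f i + 1) ∧ ∑ i, g i = n := by
  classical
  obtain ⟨T, -, hT⟩ := exists_subset_card_eq (s := (univ : Finset ι)) (n := n - ∑ i, f i)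
    (by rw [card_univ]; omega)
  refine ⟨fun i => f i + if i ∈ T then 1 else 0, fun i => by dsimp only; split_ifs <;> omega, ?_⟩
  rw [sum_add_distrib, sum_ite_mem, univ_inter, ← card_eq_sum_ones, hT]
  omega

theorem exists_nat_round_sum_eq {ι : Type*} [Fintype ι] (x : ι → ℝ) (hx : ∀ i, 0 ≤ x i)
    (n : ℕ) (hsum : ∑ i, x i = n) :
    ∃ k : ι → ℕ, ∑ i, k i = n ∧ ∀ i, |(k i : ℝ) - x i| ≤ 1 := by
  have h_floor_le (i : ι) : (⌊x i⌋₊ : ℝ) ≤ x i := Nat.floor_le (hx i)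
  have h_lt_floor (i : ι) : x i < ⌊x i⌋₊ + 1 := Nat.lt_floor_add_one _
  obtain ⟨k, hk, hk_sum⟩ := exists_le_le_add_one_sum_eq (fun i => ⌊x i⌋₊) (n := n)
    (by
      suffices (∑ i, ⌊x i⌋₊ : ℕ) ≤ (n : ℝ) by exact_mod_cast this
      push_cast
      exact hsum ▸ sum_le_sum fun i _ => h_floor_le i)
    (by
      suffices (n : ℝ) ≤ (∑ i, ⌊x i⌋₊ + Fintype.card ι : ℕ) by exact_mod_cast this
      push_cast
      rw [← hsum, ← card_univ, card_eq_sum_ones, Nat.cast_sum, Nat.cast_one, ← sum_add_distrib]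
      exact sum_le_sum fun i _ => (h_lt_floor i).le)
  refine ⟨k, hk_sum, fun i => abs_le.mpr ⟨?_, ?_⟩⟩
  · have : ((⌊x i⌋₊ : ℕ) : ℝ) ≤ k i := by exact_mod_cast (hk i).1
    linarith [h_lt_floor i]
  · have : (k i : ℝ) ≤ ⌊x i⌋₊ + 1 := by exact_mod_cast (hk i).2
    linarith [h_floor_le i]

theorem exists_grid_rounding_general {A : Type*} [Fintype A]
    (p : A → ℝ) (hp0 : ∀ a, 0 ≤ p a) (hp1 : ∑ a, p a = 1)
    (s : ℕ) (hs : 0 < s) :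
    ∃ q : A → ℝ, (∀ a, ∃ k : ℕ, k ≤ s ∧ q a = (k : ℝ) / s) ∧
      (∑ a, q a = 1) ∧ ∀ a, |q a - p a| ≤ 1 / s := by
  have hs' : (0 : ℝ) < s := by exact_mod_cast hs
  obtain ⟨k, hk_sum, hk_near⟩ := exists_nat_round_sum_eq (fun a => s * p a)
    (fun a => mul_nonneg hs'.le (hp0 a)) s (by rw [← mul_sum, hp1, mul_one])
  refine ⟨fun a => (k a : ℝ) / s, fun a => ⟨k a, ?_, rfl⟩, ?_, fun a => ?_⟩
  · exact hk_sum ▸ single_le_sum (fun _ _ => Nat.zero_le _) (mem_univ a)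
  · rw [← sum_div, ← Nat.cast_sum, hk_sum, div_self hs'.ne']
  · rw [show (k a : ℝ) / s - p a = ((k a : ℝ) - s * p a) / s by field_simp,
      abs_div, abs_of_pos hs']
    exact div_le_div_of_nonneg_right (hk_near a) hs'.le

/-- Rounding a probability vector to the uniform grid of step `1/s`:
there is a grid probability vector `q` (values in `{0, 1/s, …, 1}`, summing
to `1`) that is component-wise within `1/s` of `p`. -/
theorem exists_grid_rounding {A : Type*} [Fintype A] [Nonempty A]
    (p : A → ℝ) (hp0 : ∀ a, 0 ≤ p a) (hp1 : ∑ a, p a = 1)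
    (s : ℕ) (hs : 0 < s) :
    ∃ q : A → ℝ, (∀ a, ∃ k : ℕ, k ≤ s ∧ q a = (k : ℝ) / s) ∧
      (∑ a, q a = 1) ∧ ∀ a, |q a - p a| ≤ 1 / s :=
  exists_grid_rounding_general p hp0 hp1 s hs
end
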